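/- arXiv:1001.0439 — 3 statements merged into one kernel-verified Lean document; each statement's English description precedes it below -/
import Mathlib

section
/- Let T > 0 and let f : ℝ → ℝ be càdlàg and of bounded variation on [0,T] with Δf(s) > −1 for every s ∈ (0,T]. Then for every t ∈ [0,T] the family ((1 + Δf(s)) e^{−Δf(s)})_{s ∈ (0,t]} is multipliable with product lying in (0,1]; consequently the Stieltjes exponential satisfies 𝔈(f)(t) ≤ e^{f(t)}. -/
/-!
The jumps of `f` on `(0, t]` are bounded in total by the variation of `f`, so they are absolutely
summable. Writing each factor as `(1 + x) e^{-x} = exp (log (1 + x) - x)`, the exponents are summable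
(since `log (1 + x) = x + O(x²)`) and nonpositive (since `log (1 + x) ≤ x`), so the product is the
exponential of a convergent nonpositive sum.
-/

open Set Filter

/-- The jump of `f` at `s`: `f s` minus the left limit of `f` at `s`. -/
noncomputable def jumpAt (f : ℝ → ℝ) (s : ℝ) : ℝ := f s - Function.leftLim f s

/-- `f` is càdlàg on `[0,T]`: right-continuous at each point of `[0,T]` and
possessing left limits at each point of `(0,T]`. -/
def CadlagOn (f : ℝ → ℝ) (T : ℝ) : Prop :=
  (∀ t ∈ Set.Icc (0 : ℝ) T, ContinuousWithinAt f (Set.Ici t) t) ∧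
  (∀ s ∈ Set.Ioc (0 : ℝ) T,
    Filter.Tendsto f (nhdsWithin s (Set.Iio s)) (nhds (Function.leftLim f s)))

/-- The Stieltjes exponential `𝔈(f)(t) = e^{f t} ∏_{0<s≤t} (1 + Δf s) e^{-Δf s}`. -/
noncomputable def stieltjesExp (f : ℝ → ℝ) (t : ℝ) : ℝ :=
  Real.exp (f t) *
    ∏' s : Set.Ioc (0 : ℝ) t, (1 + jumpAt f s) * Real.exp (-(jumpAt f s))


open Topology Function

section JumpVariation

variable {E : Type*} [EMetricSpace E]

/-- Where `f` has no left limit, `leftLim f s = f s`, so the bound holds for every `f`. -/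
lemma edist_leftLim_le_eVariationOn (f : ℝ → E) {a s : ℝ} (has : a < s) :
    edist (f s) (leftLim f s) ≤ eVariationOn f (Icc a s) := by
  by_cases hlim : ∃ y, Tendsto f (𝓝[<] s) (𝓝 y)
  · obtain ⟨y, hy⟩ := hlim
    rw [leftLim_eq_of_tendsto hy]
    refine le_of_tendsto (tendsto_const_nhds.edist hy) ?_
    filter_upwards [Ioo_mem_nhdsLT has] with u hu
    exact eVariationOn.edist_le f ⟨has.le, le_rfl⟩ ⟨hu.1.le, hu.2.le⟩
  · simp [leftLim_eq_of_not_tendsto f hlim]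

lemma sum_edist_leftLim_le_eVariationOn (f : ℝ → E) {a b : ℝ} (S : Finset ℝ)
    (hS : ↑S ⊆ Ioc a b) :
    ∑ s ∈ S, edist (f s) (leftLim f s) ≤ eVariationOn f (Icc a b) := by
  induction S using Finset.induction_on_max generalizing b with
  | empty => simp
  | insert m S hlt ih =>
    have hm : m ∈ Ioc a b := hS (Finset.mem_insert_self m S)
    -- `c` separates `m` from the rest of `S`, so `[a, m]` splits at `c`
    set c := (insert a S).max' (Finset.insert_nonempty a S)
    have hac : a ≤ c := Finset.le_max' _ a (Finset.mem_insert_self a S)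
    have hcm : c < m := (Finset.max'_lt_iff _ _).2 fun x hx => by
      rcases Finset.mem_insert.1 hx with rfl | hx
      exacts [hm.1, hlt x hx]
    have hSc : ↑S ⊆ Ioc a c := fun x hx =>
      ⟨(hS (Finset.mem_insert_of_mem hx)).1, Finset.le_max' _ x (Finset.mem_insert_of_mem hx)⟩
    rw [Finset.sum_insert fun hmS => (hlt m hmS).false]
    calc edist (f m) (leftLim f m) + ∑ s ∈ S, edist (f s) (leftLim f s)
        ≤ eVariationOn f (Icc c m) + eVariationOn f (Icc a c) :=
          add_le_add (edist_leftLim_le_eVariationOn f hcm) (ih hSc)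
      _ = eVariationOn f (Icc a m) := by
          simpa [add_comm] using eVariationOn.Icc_add_Icc f (s := univ) hac hcm.le (mem_univ c)
      _ ≤ eVariationOn f (Icc a b) := eVariationOn.mono f (Icc_subset_Icc_right hm.2)

end JumpVariation

lemma summable_abs_jumpAt {f : ℝ → ℝ} {a b : ℝ} (hf : BoundedVariationOn f (Icc a b)) :
    Summable fun s : Ioc a b => |jumpAt f s| := by
  refine summable_of_sum_le (c := (eVariationOn f (Icc a b)).toReal) (fun _ => abs_nonneg _)
    fun u => ?_
  rw [← ENNReal.ofReal_le_iff_le_toReal hf, ENNReal.ofReal_sum_of_nonneg fun _ _ => abs_nonneg _]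
  calc ∑ s ∈ u, ENNReal.ofReal |jumpAt f s|
      = ∑ s ∈ u.map (Embedding.subtype _), edist (f s) (leftLim f s) := by
        simp [jumpAt, edist_dist, Real.dist_eq]
    _ ≤ eVariationOn f (Icc a b) :=
        sum_edist_leftLim_le_eVariationOn f _ (by simp_all [subset_def])

lemma exists_hasProd_one_add_mul_exp_neg {ι : Type*} {x : ι → ℝ} (hx : Summable x)
    (hx₁ : ∀ i, -1 < x i) :
    ∃ p ∈ Ioc 0 1, HasProd (fun i => (1 + x i) * Real.exp (-x i)) p := by
  set g := fun i => Real.log (1 + x i) - x i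
  have hg : Summable g := (Real.summable_log_one_add_of_summable hx).sub hx
  have hg_nonpos : ∀ i, g i ≤ 0 := fun i => by
    linarith [Real.log_le_sub_one_of_pos (show 0 < 1 + x i by linarith [hx₁ i])]
  refine ⟨Real.exp (∑' i, g i), ⟨Real.exp_pos _, Real.exp_le_one_iff.2 (tsum_nonpos hg_nonpos)⟩,
    ?_⟩
  convert hg.hasSum.rexp using 1
  funext i
  rw [Function.comp_apply, Real.exp_sub, Real.exp_log (by linarith [hx₁ i]), Real.exp_neg,
    div_eq_mul_inv]

theorem stieltjesExp_le_exp_general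
    (T : ℝ) (f : ℝ → ℝ)
    (hBV : BoundedVariationOn f (Set.Icc (0 : ℝ) T))
    (hjump : ∀ s ∈ Set.Ioc (0 : ℝ) T, -1 < jumpAt f s) :
    ∀ t ∈ Set.Icc (0 : ℝ) T,
      Multipliable
        (fun s : Set.Ioc (0 : ℝ) t => (1 + jumpAt f s) * Real.exp (-(jumpAt f s))) ∧
      (∏' s : Set.Ioc (0 : ℝ) t, (1 + jumpAt f s) * Real.exp (-(jumpAt f s))) ∈
        Set.Ioc (0 : ℝ) 1 ∧
      stieltjesExp f t ≤ Real.exp (f t) := by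
  rintro t ⟨-, htT⟩
  have hsum : Summable fun s : Ioc (0 : ℝ) t => jumpAt f s :=
    (summable_abs_jumpAt (hBV.mono (Icc_subset_Icc_right htT))).of_abs
  obtain ⟨p, hp, hprod⟩ :=
    exists_hasProd_one_add_mul_exp_neg hsum fun s => hjump s ⟨s.2.1, s.2.2.trans htT⟩
  refine ⟨hprod.multipliable, hprod.tprod_eq ▸ hp, ?_⟩
  rw [stieltjesExp, hprod.tprod_eq]
  exact mul_le_of_le_one_right (Real.exp_pos _).le hp.2

/-- For `f` càdlàg of bounded variation on `[0,T]` with all jumps `> -1`,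
for every `t ∈ [0,T]` the family `((1 + Δf s) e^{-Δf s})_{s ∈ (0,t]}` is multipliable with
product in `(0,1]`; consequently `𝔈(f)(t) ≤ e^{f t}`. -/
theorem stieltjesExp_le_exp
    (T : ℝ) (hT : 0 < T) (f : ℝ → ℝ)
    (hc : CadlagOn f T) (hBV : BoundedVariationOn f (Set.Icc (0 : ℝ) T))
    (hjump : ∀ s ∈ Set.Ioc (0 : ℝ) T, -1 < jumpAt f s) :
    ∀ t ∈ Set.Icc (0 : ℝ) T,
      Multipliable
        (fun s : Set.Ioc (0 : ℝ) t => (1 + jumpAt f s) * Real.exp (-(jumpAt f s))) ∧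
      (∏' s : Set.Ioc (0 : ℝ) t, (1 + jumpAt f s) * Real.exp (-(jumpAt f s))) ∈
        Set.Ioc (0 : ℝ) 1 ∧
      stieltjesExp f t ≤ Real.exp (f t) :=
  stieltjesExp_le_exp_general T f hBV hjump
end

section
/- Let T > 0 and let f : ℝ → ℝ be càdlàg and of bounded variation on [0,T] with Δf(s) > −1 for every s ∈ (0,T]. Then the family ((Δf(s))² / (1 + Δf(s)))_{s ∈ (0,T]} is summable, i.e. ∑_{0<s≤T} (Δf(s))²/(1 + Δf(s)) < ∞. -/
/-!
The jumps of a function of bounded variation are absolutely summable: the jumps at finitely many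
points `s₁ < ⋯ < sₙ` are read off on the disjoint intervals `(sᵢ₋₁, sᵢ]`, so their total is at
most the variation. Since `x² / (1 + x) = O(x)` as `x → 0` and all but finitely many jumps are
small, the family is then dominated by the absolute jumps.
-/

open Set Filter

open Topology

theorem sum_edist_leftLim_le_eVariationOn_s5 {α E : Type*} [LinearOrder α] [TopologicalSpace α]
    [OrderTopology α] [PseudoEMetricSpace E] {f : α → E} {s : Set α}
    (S : Finset α) (hS : ↑S ⊆ s) (hne : ∀ x ∈ S, (𝓝[s ∩ Iio x] x).NeBot)
    (hlim : ∀ x ∈ S, Tendsto f (𝓝[s ∩ Iio x] x) (𝓝 (Function.leftLim f x))) :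
    ∑ x ∈ S, edist (f x) (Function.leftLim f x) ≤ eVariationOn f s := by
  suffices ∀ t : Set α, (∀ x ∈ S, s ∩ Iic x ⊆ t) →
      ∑ x ∈ S, edist (f x) (Function.leftLim f x) ≤ eVariationOn f t from
    this s fun _ _ ↦ inter_subset_left
  induction S using Finset.induction_on_max with
  | empty => simp
  | insert m S hlt ih =>
    intro t ht
    have hm := Finset.mem_insert_self m S
    have hS' : ↑S ⊆ s := fun x hx ↦ hS (Finset.mem_insert_of_mem hx)
    calc ∑ x ∈ insert m S, edist (f x) (Function.leftLim f x)
        = edist (f m) (Function.leftLim f m) + ∑ x ∈ S, edist (f x) (Function.leftLim f x) :=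
          Finset.sum_insert fun h ↦ (hlt m h).false
      _ ≤ edist (f m) (Function.leftLim f m) + eVariationOn f (s ∩ Iio m) := by
          gcongr
          exact ih hS' (fun x hx ↦ hne x (Finset.mem_insert_of_mem hx))
            (fun x hx ↦ hlim x (Finset.mem_insert_of_mem hx)) _
            fun x hx ↦ inter_subset_inter_right _ (Iic_subset_Iio.2 (hlt x hx))
      _ = eVariationOn f (s ∩ Iic m) := by
          rw [add_comm, eVariationOn.eVariationOn_on_inter_Iic_eq_Iio_add_edist (hne m hm)
            (hS hm) (hlim m hm)]
      _ ≤ eVariationOn f t := eVariationOn.mono f (ht m hm)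

theorem BoundedVariationOn.summable_dist_leftLim {E : Type*} [PseudoMetricSpace E]
    [CompleteSpace E] {f : ℝ → E} {a b : ℝ} (hf : BoundedVariationOn f (Icc a b)) :
    Summable fun x : Ioc a b ↦ dist (f x) (Function.leftLim f x) := by
  have hnhds : ∀ x ∈ Ioc a b, 𝓝[Icc a b ∩ Iio x] x = 𝓝[<] x := fun x hx ↦ by
    rw [show Icc a b ∩ Iio x = Ico a x by grind, nhdsWithin_Ico_eq_nhdsLT hx.1]
  refine summable_of_sum_le (c := (eVariationOn f (Icc a b)).toReal) (fun _ ↦ dist_nonneg)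
    fun u ↦ ?_
  have hmem : ∀ x ∈ u.map (Function.Embedding.subtype _), x ∈ Ioc a b := fun x hx ↦ by
    obtain ⟨y, -, rfl⟩ := Finset.mem_map.1 hx
    exact y.2
  have hbound := sum_edist_leftLim_le_eVariationOn_s5 _
    (fun x hx ↦ Ioc_subset_Icc_self (hmem x hx))
    (fun x hx ↦ by rw [hnhds x (hmem x hx)]; infer_instance)
    (fun x hx ↦ by
      rw [hnhds x (hmem x hx)]
      exact tendsto_leftLim_of_tendsto (hnhds x (hmem x hx) ▸ hf.exists_tendsto_left x))
  rw [Finset.sum_map] at hbound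
  simpa [edist_dist, ← ENNReal.ofReal_sum_of_nonneg, ENNReal.ofReal_le_iff_le_toReal hf]
    using hbound

theorem Summable.sq_div_one_add {ι : Type*} {x : ι → ℝ} (hx : Summable x) :
    Summable fun i ↦ x i ^ 2 / (1 + x i) := by
  refine hx.abs.of_norm_bounded_eventually ?_
  filter_upwards [hx.abs.tendsto_cofinite_zero.eventually (eventually_le_nhds one_half_pos)]
    with i hi
  have h1 : 1 / 2 ≤ |1 + x i| := le_abs.2 (Or.inl (by linarith [(abs_le.1 hi).1]))
  rw [Real.norm_eq_abs, abs_div, abs_pow, div_le_iff₀ (by positivity)]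
  nlinarith [abs_nonneg (x i)]

theorem summable_sq_jump_div_one_add_jump_general
    (T : ℝ) (f : ℝ → ℝ)
    (hBV : BoundedVariationOn f (Set.Icc (0 : ℝ) T)) :
    Summable (fun s : Set.Ioc (0 : ℝ) T => (jumpAt f s) ^ 2 / (1 + jumpAt f s)) := by
  have hjump : Summable fun s : Set.Ioc (0 : ℝ) T ↦ jumpAt f s :=
    Summable.of_norm <| by simpa [jumpAt, dist_eq_norm] using hBV.summable_dist_leftLim
  exact hjump.sq_div_one_add

/-- For `f` càdlàg of bounded variation on `[0,T]` with all jumps `> -1`,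
the family `((Δf s)² / (1 + Δf s))_{s ∈ (0,T]}` is summable. -/
theorem summable_sq_jump_div_one_add_jump
    (T : ℝ) (hT : 0 < T) (f : ℝ → ℝ)
    (hc : CadlagOn f T) (hBV : BoundedVariationOn f (Set.Icc (0 : ℝ) T))
    (hjump : ∀ s ∈ Set.Ioc (0 : ℝ) T, -1 < jumpAt f s) :
    Summable (fun s : Set.Ioc (0 : ℝ) T => (jumpAt f s) ^ 2 / (1 + jumpAt f s)) :=
  summable_sq_jump_div_one_add_jump_general T f hBV
end

section
/- Let T > 0 and let ν : ℝ → ℝ be a nondecreasing right-continuous function (a Stieltjes function) with induced Borel measure dν. Then for every constant u₀ ∈ ℝ and all 0 ≤ s ≤ t ≤ T, the function u(t) := u₀ · 𝔈(ν)(t) / 𝔈(ν)(s) satisfies the Lebesgue–Stieltjes integral equation u(t) = u(s) + ∫_{(s,t]} u(r⁻) dν(r), where u(r⁻) denotes the left limit of u at r. -/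
open Set Filter MeasureTheory

/-!
Write `E = 𝔈(ν)`, so that `log E = ν + ∑_{0<r≤·} (log (1 + Δν r) - Δν r)`. On `[0, ∞)` the
increments of `log E` lie between `0` and those of `ν`; together with `∏ (1 + Δν) ≥ 1 + ∑ Δν`
this gives, for `0 ≤ a ≤ b`,
  `E a (ν b - ν a) ≤ E b - E a ≤ E b (ν b - ν a)`,
while at a jump `E x = E(x⁻) (1 + Δν x)`.
The upper bound makes `dE ≪ dν`, so by Besicovitch differentiation the density of `dE` is, for
`dν`-a.e. `x`, the limit of `dE [x - r, x + r] / dν [x - r, x + r]`. At an atom of `dν` this ratio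
tends to `ΔE x / Δν x = E(x⁻)`. Off the atoms, the countably many discontinuities of `E` are
`dν`-null, and at a continuity point the two bounds squeeze the ratio between `E (x - 2r)` and
`E (x + r)`. Freezing all functions outside `[s, t]` makes them bounded, so the argument applies
on `[s, t]`.
-/

open Topology Function
open scoped ENNReal NNReal

theorem Set.Countable.ae_measure_singleton_ne_zero_of_mem {α : Type*} [MeasurableSpace α]
    {D : Set α} (hD : D.Countable) (μ : Measure α) : ∀ᵐ x ∂μ, x ∈ D → μ {x} ≠ 0 := by
  rw [ae_iff]
  push Not
  have hsub : {x | x ∈ D ∧ μ {x} = 0} ⊆ ⋃ x ∈ {x | x ∈ D ∧ μ {x} = 0}, {x} :=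
    fun x hx => mem_biUnion hx rfl
  exact measure_mono_null hsub
    ((measure_biUnion_null_iff (hD.mono fun _ hx => hx.1)).2 fun _ hx => hx.2)

theorem Besicovitch.ae_eventually_measure_closedBall_pos {β : Type*} [MetricSpace β]
    [MeasurableSpace β] [OpensMeasurableSpace β] [SecondCountableTopology β]
    [HasBesicovitchCovering β] (μ : Measure β) [SFinite μ] :
    ∀ᵐ x ∂μ, ∀ᶠ r in 𝓝[>] 0, 0 < μ (Metric.closedBall x r) :=
  (Besicovitch.vitaliFamily μ).ae_eventually_measure_pos.mono fun x hx =>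
    Besicovitch.tendsto_filterAt μ x hx

theorem MeasureTheory.tendsto_measure_closedBall_div_of_measure_singleton_ne_zero
    {α : Type*} [MetricSpace α] [MeasurableSpace α] [OpensMeasurableSpace α] [ProperSpace α]
    (ρ μ : Measure α) [IsFiniteMeasureOnCompacts ρ] [IsFiniteMeasureOnCompacts μ] {x : α}
    (hx : μ {x} ≠ 0) :
    Tendsto (fun r => ρ (Metric.closedBall x r) / μ (Metric.closedBall x r)) (𝓝[>] 0)
      (𝓝 (ρ {x} / μ {x})) := by
  have hball (ν : Measure α) [IsFiniteMeasureOnCompacts ν] :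
      Tendsto (fun r => ν (Metric.closedBall x r)) (𝓝[>] 0) (𝓝 (ν {x})) := by
    refine ((tendsto_measure_cthickening_of_isCompact isCompact_singleton).mono_left
      nhdsWithin_le_nhds).congr' ?_
    filter_upwards [self_mem_nhdsWithin] with r (hr : 0 < r)
    rw [Metric.cthickening_singleton x hr.le]
  exact ENNReal.Tendsto.div (hball ρ) (Or.inr hx) (hball μ) (Or.inl measure_singleton_lt_top.ne)

theorem MeasureTheory.tsum_measure_singleton_le {α : Type*} [MeasurableSpace α]
    [MeasurableSingletonClass α] (μ : Measure α) (S : Set α) : ∑' x : S, μ {(x : α)} ≤ μ S :=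
  ENNReal.summable.tsum_le_of_sum_le fun u =>
    calc ∑ x ∈ u, μ {(x : α)} = ∑ y ∈ u.map (Embedding.subtype _), μ {y} :=
          (Finset.sum_map u (Embedding.subtype _) fun y => μ {y}).symm
      _ = μ ↑(u.map (Embedding.subtype _)) := sum_measure_singleton
      _ ≤ μ S := measure_mono fun y hy => by
          obtain ⟨x, -, rfl⟩ := Finset.mem_map.1 hy
          exact x.2

theorem Finset.one_add_sum_le_prod_one_add {ι : Type*} (s : Finset ι) {x : ι → ℝ}
    (hx : ∀ i ∈ s, 0 ≤ x i) : 1 + ∑ i ∈ s, x i ≤ ∏ i ∈ s, (1 + x i) := by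
  classical
  induction s using Finset.induction_on with
  | empty => simp
  | insert i s hi ih =>
    rw [Finset.sum_insert hi, Finset.prod_insert hi]
    have hxi := hx i (Finset.mem_insert_self i s)
    have hs := Finset.sum_nonneg fun j hj => hx j (Finset.mem_insert_of_mem hj)
    nlinarith [ih fun j hj => hx j (Finset.mem_insert_of_mem hj)]

theorem Real.one_add_tsum_le_exp_tsum_log_one_add {ι : Type*} {x : ι → ℝ} (hx : ∀ i, 0 ≤ x i)
    (hs : Summable x) : 1 + ∑' i, x i ≤ Real.exp (∑' i, Real.log (1 + x i)) :=
  le_of_tendsto_of_tendsto' (hs.hasSum.const_add 1)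
    (Real.hasProd_of_hasSum_log (fun i => by linarith [hx i])
      (Real.summable_log_one_add_of_summable hs).hasSum)
    fun u => u.one_add_sum_le_prod_one_add fun i _ => hx i

theorem leftLim_comp_projIcc {s t : ℝ} (hst : s ≤ t) {φ : ℝ → ℝ} (hφ : MonotoneOn φ (Icc s t))
    {x : ℝ} (hx : x ∈ Ioc s t) : leftLim (fun y => φ (projIcc s t hst y)) x = leftLim φ x := by
  have hmono : Monotone fun y => φ (projIcc s t hst y) := fun _ _ hyz =>
    hφ (projIcc s t hst _).2 (projIcc s t hst _).2 (monotone_projIcc hst hyz)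
  refine (leftLim_eq_of_tendsto ((hmono.tendsto_leftLim x).congr' ?_)).symm
  filter_upwards [Ioo_mem_nhdsLT hx.1] with y hy
  rw [projIcc_of_mem hst ⟨hy.1.le, hy.2.le.trans hx.2⟩]

namespace StieltjesFunction

section Density

variable (f g : StieltjesFunction ℝ) {h : ℝ → ℝ}

theorem measure_le_smul_of_sub_le {C : ℝ≥0}
    (hC : ∀ a b, a ≤ b → f b - f a ≤ C * (g b - g a)) : f.measure ≤ C • g.measure := by
  let k : StieltjesFunction ℝ :=
    { toFun := fun x => C * g x - f x
      mono' := fun a b hab => by linarith [hC a b hab]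
      right_continuous' := fun x =>
        ((g.right_continuous x).const_mul (C : ℝ)).sub (f.right_continuous x) }
  have hsplit : C • g = f + k := by
    ext x
    show (C : ℝ) * g x = f x + (C * g x - f x)
    ring
  rw [← measure_smul, hsplit, measure_add]
  exact Measure.le_add_right le_rfl

theorem leftLim_mul_sub_leftLim_le (hh : Monotone h)
    (hlow : ∀ a b, a ≤ b → h a * (g b - g a) ≤ f b - f a) {a b : ℝ} (hab : a ≤ b) :
    leftLim h a * (g b - leftLim g a) ≤ f b - leftLim f a :=
  le_of_tendsto_of_tendsto ((hh.tendsto_leftLim a).mul ((g.mono.tendsto_leftLim a).const_sub _))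
    ((f.mono.tendsto_leftLim a).const_sub _) <| by
      filter_upwards [self_mem_nhdsWithin] with a' (ha' : a' < a)
      exact hlow a' b (ha'.le.trans hab)

theorem sub_leftLim_le_mul_sub_leftLim
    (hup : ∀ a b, a ≤ b → f b - f a ≤ h b * (g b - g a)) {a b : ℝ} (hab : a ≤ b) :
    f b - leftLim f a ≤ h b * (g b - leftLim g a) :=
  le_of_tendsto_of_tendsto ((f.mono.tendsto_leftLim a).const_sub _)
    (((g.mono.tendsto_leftLim a).const_sub _).const_mul _) <| by
      filter_upwards [self_mem_nhdsWithin] with a' (ha' : a' < a)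
      exact hup a' b (ha'.le.trans hab)

theorem tendsto_measure_closedBall_div_of_continuousAt (hh : Monotone h)
    (hlow : ∀ a b, a ≤ b → h a * (g b - g a) ≤ f b - f a)
    (hup : ∀ a b, a ≤ b → f b - f a ≤ h b * (g b - g a)) {x : ℝ} (hx : ContinuousAt h x)
    (hpos : ∀ᶠ r in 𝓝[>] 0, 0 < g.measure (Metric.closedBall x r)) :
    Tendsto (fun r => f.measure (Metric.closedBall x r) / g.measure (Metric.closedBall x r))
      (𝓝[>] 0) (𝓝 (ENNReal.ofReal (h x))) := by
  have hlim (c : ℝ) : Tendsto (fun r => h (x + c * r)) (𝓝[>] 0) (𝓝 (h x)) := by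
    refine hx.tendsto.comp (Tendsto.mono_left ?_ nhdsWithin_le_nhds)
    exact (by fun_prop : Continuous fun r : ℝ => x + c * r).tendsto' 0 x (by simp)
  let ratio r := (f (x + r) - leftLim f (x - r)) / (g (x + r) - leftLim g (x - r))
  have hratio : Tendsto ratio (𝓝[>] 0) (𝓝 (h x)) := by
    refine tendsto_of_tendsto_of_tendsto_of_le_of_le' (hlim (-2)) (hlim 1) ?_ ?_ <;>
    filter_upwards [hpos, self_mem_nhdsWithin] with r hr (hr0 : 0 < r) <;>
    rw [Real.closedBall_eq_Icc, measure_Icc, ENNReal.ofReal_pos] at hr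
    · rw [le_div_iff₀ hr]
      calc h (x + -2 * r) * (g (x + r) - leftLim g (x - r))
          ≤ leftLim h (x - r) * (g (x + r) - leftLim g (x - r)) := by
            gcongr
            exact hh.le_leftLim (by linarith)
        _ ≤ _ := leftLim_mul_sub_leftLim_le f g hh hlow (by linarith)
    · rw [div_le_iff₀ hr, one_mul]
      exact sub_leftLim_le_mul_sub_leftLim f g hup (by linarith)
  refine (ENNReal.tendsto_ofReal hratio).congr' ?_
  filter_upwards [hpos] with r hr
  rw [Real.closedBall_eq_Icc, measure_Icc] at hr ⊢
  rw [measure_Icc, ENNReal.ofReal_div_of_pos (ENNReal.ofReal_pos.1 hr)]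

theorem ofReal_leftLim_eq_measure_singleton_div {x : ℝ}
    (hjump : f x - leftLim f x = leftLim h x * (g x - leftLim g x)) (hx : g.measure {x} ≠ 0) :
    ENNReal.ofReal (leftLim h x) = f.measure {x} / g.measure {x} := by
  rw [measure_singleton, ne_eq, ENNReal.ofReal_eq_zero, not_le] at hx
  rw [measure_singleton, measure_singleton, ← ENNReal.ofReal_div_of_pos hx, hjump,
    mul_div_cancel_right₀ _ hx.ne']

theorem ae_rnDeriv_eq_ofReal_leftLim (hh : Monotone h)
    (hlow : ∀ a b, a ≤ b → h a * (g b - g a) ≤ f b - f a)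
    (hup : ∀ a b, a ≤ b → f b - f a ≤ h b * (g b - g a)) {S : Set ℝ}
    (hjump : ∀ x ∈ S, f x - leftLim f x = leftLim h x * (g x - leftLim g x)) :
    ∀ᵐ x ∂g.measure, x ∈ S → f.measure.rnDeriv g.measure x = ENNReal.ofReal (leftLim h x) := by
  filter_upwards [Besicovitch.ae_tendsto_rnDeriv f.measure g.measure,
    hh.countable_not_continuousAt.ae_measure_singleton_ne_zero_of_mem g.measure,
    Besicovitch.ae_eventually_measure_closedBall_pos g.measure] with x hx hatom hpos hxS
  refine tendsto_nhds_unique hx ?_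
  by_cases hcont : ContinuousAt h x
  · rw [hcont.continuousWithinAt.leftLim_eq]
    exact tendsto_measure_closedBall_div_of_continuousAt f g hh hlow hup hcont hpos
  · rw [ofReal_leftLim_eq_measure_singleton_div f g (hjump x hxS) (hatom hcont)]
    exact tendsto_measure_closedBall_div_of_measure_singleton_ne_zero _ _ (hatom hcont)

theorem setIntegral_leftLim_eq_sub (hh : Monotone h) (h0 : ∀ x, 0 ≤ h x) {C : ℝ≥0}
    (hC : ∀ x, h x ≤ C) (hlow : ∀ a b, a ≤ b → h a * (g b - g a) ≤ f b - f a)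
    (hup : ∀ a b, a ≤ b → f b - f a ≤ h b * (g b - g a)) {s t : ℝ} (hst : s ≤ t)
    (hjump : ∀ x ∈ Ioc s t, f x - leftLim f x = leftLim h x * (g x - leftLim g x)) :
    ∫ r in Ioc s t, leftLim h r ∂g.measure = f t - f s := by
  have hac : f.measure ≪ g.measure := Measure.absolutelyContinuous_of_le_smul <|
    measure_le_smul_of_sub_le f g fun a b hab =>
      (hup a b hab).trans (by gcongr; exacts [sub_nonneg.2 (g.mono hab), hC b])
  have hnonneg : 0 ≤ᵐ[g.measure.restrict (Ioc s t)] leftLim h :=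
    Eventually.of_forall fun x => (h0 (x - 1)).trans (hh.le_leftLim (by linarith))
  rw [integral_eq_lintegral_of_nonneg_ae hnonneg hh.leftLim.measurable.aestronglyMeasurable,
    setLIntegral_congr_fun_ae measurableSet_Ioc
      ((ae_rnDeriv_eq_ofReal_leftLim f g hh hlow hup hjump).mono fun x hx hxS => (hx hxS).symm),
    Measure.setLIntegral_rnDeriv hac, measure_Ioc, ENNReal.toReal_ofReal]
  linarith [f.mono hst]

end Density

noncomputable def IccExtend {s t : ℝ} (hst : s ≤ t) (f : ℝ → ℝ) (hf : MonotoneOn f (Icc s t))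
    (hfc : ∀ x ∈ Icc s t, ContinuousWithinAt f (Ici x) x) : StieltjesFunction ℝ where
  toFun x := f (projIcc s t hst x)
  mono' _ _ hxy := hf (projIcc s t hst _).2 (projIcc s t hst _).2 (monotone_projIcc hst hxy)
  right_continuous' x := ContinuousWithinAt.comp (f := fun y => (projIcc s t hst y : ℝ))
    (hfc _ (projIcc s t hst x).2)
    (continuous_subtype_val.comp continuous_projIcc).continuousWithinAt
    fun _ hy => monotone_projIcc hst hy

@[simp]
theorem IccExtend_apply {s t : ℝ} (hst : s ≤ t) {f : ℝ → ℝ} (hf : MonotoneOn f (Icc s t))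
    (hfc : ∀ x ∈ Icc s t, ContinuousWithinAt f (Ici x) x) (x : ℝ) :
    IccExtend hst f hf hfc x = f (projIcc s t hst x) :=
  rfl

theorem measure_restrict_Ioc_eq_of_eqOn {f g : StieltjesFunction ℝ} {s t : ℝ}
    (hfg : EqOn f g (Icc s t)) : f.measure.restrict (Ioc s t) = g.measure.restrict (Ioc s t) := by
  refine Measure.ext_of_Ioc _ _ fun a b _ => ?_
  rw [Measure.restrict_apply measurableSet_Ioc, Measure.restrict_apply measurableSet_Ioc,
    Ioc_inter_Ioc]
  rcases le_or_gt (max a s) (min b t) with hle | hlt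
  · rw [measure_Ioc, measure_Ioc, hfg ⟨le_max_right _ _, hle.trans (min_le_right _ _)⟩,
      hfg ⟨(le_max_right _ _).trans hle, min_le_right _ _⟩]
  · simp [Ioc_eq_empty_of_le hlt.le]

theorem setIntegral_leftLim_eq_sub_of_Icc (g : StieltjesFunction ℝ) {f h : ℝ → ℝ} {s t : ℝ}
    (hst : s ≤ t) (hh : MonotoneOn h (Icc s t)) (h0 : ∀ x ∈ Icc s t, 0 ≤ h x)
    (hf : ∀ x ∈ Icc s t, ContinuousWithinAt f (Ici x) x)
    (hlow : ∀ a ∈ Icc s t, ∀ b ∈ Icc s t, a ≤ b → h a * (g b - g a) ≤ f b - f a)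
    (hup : ∀ a ∈ Icc s t, ∀ b ∈ Icc s t, a ≤ b → f b - f a ≤ h b * (g b - g a))
    (hjump : ∀ x ∈ Ioc s t, f x - leftLim f x = leftLim h x * (g x - leftLim g x)) :
    ∫ r in Ioc s t, leftLim h r ∂g.measure = f t - f s := by
  have hfmono : MonotoneOn f (Icc s t) := fun a ha b hb hab => by
    nlinarith [hlow a ha b hb hab, h0 a ha, g.mono hab]
  let p := projIcc s t hst
  let F := IccExtend hst f hfmono hf
  let G := IccExtend hst g (g.mono.monotoneOn _) fun x _ => g.right_continuous x
  have hmono : Monotone fun x => h (p x) := fun _ _ hxy =>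
    hh (p _).2 (p _).2 (monotone_projIcc hst hxy)
  have hG : EqOn G g (Icc s t) := fun x hx => by simp [G, projIcc_of_mem hst hx]
  have key := setIntegral_leftLim_eq_sub F G hmono (fun x => h0 _ (p x).2)
    (C := ⟨h t, h0 t (right_mem_Icc.2 hst)⟩) (fun x => hh (p x).2 (right_mem_Icc.2 hst) (p x).2.2)
    (fun a b hab => hlow _ (p a).2 _ (p b).2 (monotone_projIcc hst hab))
    (fun a b hab => hup _ (p a).2 _ (p b).2 (monotone_projIcc hst hab)) hst
    (fun x hx => by
      have hx' : p x = ⟨x, Ioc_subset_Icc_self hx⟩ := projIcc_of_mem hst _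
      have hFl : leftLim F x = leftLim f x := leftLim_comp_projIcc hst hfmono hx
      have hGl : leftLim G x = leftLim g x := leftLim_comp_projIcc hst (g.mono.monotoneOn _) hx
      rw [hFl, hGl, leftLim_comp_projIcc hst hh hx]
      simpa [F, G, p, hx'] using hjump x hx)
  rw [measure_restrict_Ioc_eq_of_eqOn hG] at key
  rw [← setIntegral_congr_fun measurableSet_Ioc fun x hx => leftLim_comp_projIcc hst hh hx, key]
  simp [F, projIcc_left, projIcc_right]

section Exponential

variable (ν : StieltjesFunction ℝ)

theorem jumpAt_nonneg (x : ℝ) : 0 ≤ jumpAt ν x :=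
  sub_nonneg.2 (ν.mono.leftLim_le le_rfl)

theorem jumpAt_eq_toReal_measure_singleton (x : ℝ) : jumpAt ν x = (ν.measure {x}).toReal := by
  rw [measure_singleton, ENNReal.toReal_ofReal (sub_nonneg.2 (ν.mono.leftLim_le le_rfl))]
  rfl

theorem summable_jumpAt {S : Set ℝ} (hS : ν.measure S ≠ ∞) : Summable fun x : S => jumpAt ν x := by
  simp_rw [jumpAt_eq_toReal_measure_singleton]
  exact ENNReal.summable_toReal (ne_top_of_le_ne_top hS (tsum_measure_singleton_le _ _))

theorem tsum_jumpAt_le {S : Set ℝ} (hS : ν.measure S ≠ ∞) :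
    ∑' x : S, jumpAt ν x ≤ (ν.measure S).toReal := by
  simp_rw [jumpAt_eq_toReal_measure_singleton]
  rw [← ENNReal.tsum_toReal_eq fun _ => measure_singleton_lt_top.ne]
  exact ENNReal.toReal_mono hS (tsum_measure_singleton_le _ _)

theorem toReal_measure_Ioc {a b : ℝ} (hab : a ≤ b) : (ν.measure (Ioc a b)).toReal = ν b - ν a := by
  rw [measure_Ioc, ENNReal.toReal_ofReal (sub_nonneg.2 (ν.mono hab))]

theorem toReal_measure_Ioo {a b : ℝ} (hab : a < b) :
    (ν.measure (Ioo a b)).toReal = leftLim ν b - ν a := by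
  rw [measure_Ioo, ENNReal.toReal_ofReal (sub_nonneg.2 (ν.mono.le_leftLim hab))]

noncomputable def logJumpFactor (x : ℝ) : ℝ := Real.log (1 + jumpAt ν x) - jumpAt ν x

theorem neg_jumpAt_le_logJumpFactor (x : ℝ) : -jumpAt ν x ≤ ν.logJumpFactor x := by
  have := Real.log_nonneg (le_add_of_nonneg_right (ν.jumpAt_nonneg x))
  rw [logJumpFactor]
  linarith

theorem logJumpFactor_nonpos (x : ℝ) : ν.logJumpFactor x ≤ 0 := by
  have := Real.log_le_sub_one_of_pos (by linarith [ν.jumpAt_nonneg x] : 0 < 1 + jumpAt ν x)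
  rw [logJumpFactor]
  linarith

theorem summable_logJumpFactor {S : Set ℝ} (hS : ν.measure S ≠ ∞) :
    Summable fun x : S => ν.logJumpFactor x :=
  (ν.summable_jumpAt hS).of_norm_bounded fun x => by
    rw [Real.norm_eq_abs, abs_le]
    exact ⟨ν.neg_jumpAt_le_logJumpFactor x, (ν.logJumpFactor_nonpos x).trans (ν.jumpAt_nonneg x)⟩

theorem neg_toReal_measure_le_tsum_logJumpFactor {S : Set ℝ} (hS : ν.measure S ≠ ∞) :
    -(ν.measure S).toReal ≤ ∑' x : S, ν.logJumpFactor x := by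
  rw [neg_le, ← tsum_neg]
  exact (Summable.tsum_le_tsum (fun x : S => neg_le.1 (ν.neg_jumpAt_le_logJumpFactor x))
    (ν.summable_logJumpFactor hS).neg (ν.summable_jumpAt hS)).trans
    (ν.tsum_jumpAt_le hS)

noncomputable def logStieltjesExp (x : ℝ) : ℝ := ν x + ∑' r : Ioc 0 x, ν.logJumpFactor r

theorem stieltjesExp_eq_exp_logStieltjesExp (x : ℝ) :
    stieltjesExp ν x = Real.exp (ν.logStieltjesExp x) := by
  rw [stieltjesExp, logStieltjesExp, Real.exp_add]
  have hfactor : (fun r : Ioc (0 : ℝ) x => (1 + jumpAt ν r) * Real.exp (-jumpAt ν r)) =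
      Real.exp ∘ fun r : Ioc (0 : ℝ) x => ν.logJumpFactor r := funext fun r => by
    rw [comp_apply, logJumpFactor, Real.exp_sub,
      Real.exp_log (by linarith [ν.jumpAt_nonneg r]), Real.exp_neg, div_eq_mul_inv]
  rw [hfactor, (ν.summable_logJumpFactor measure_Ioc_lt_top.ne).hasSum.rexp.tprod_eq]

theorem logStieltjesExp_sub {a b : ℝ} (ha : 0 ≤ a) (hab : a ≤ b) :
    ν.logStieltjesExp b - ν.logStieltjesExp a = ν b - ν a + ∑' r : Ioc a b, ν.logJumpFactor r := by
  have h := Summable.tsum_union_disjoint (f := ν.logJumpFactor) (s := Ioc 0 a) (t := Ioc a b)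
    (Ioc_disjoint_Ioc_of_le le_rfl) (ν.summable_logJumpFactor measure_Ioc_lt_top.ne)
    (ν.summable_logJumpFactor measure_Ioc_lt_top.ne)
  rw [Ioc_union_Ioc_eq_Ioc ha hab] at h
  rw [logStieltjesExp, logStieltjesExp, h]
  ring

theorem logStieltjesExp_sub_nonneg {a b : ℝ} (ha : 0 ≤ a) (hab : a ≤ b) :
    0 ≤ ν.logStieltjesExp b - ν.logStieltjesExp a := by
  have := ν.neg_toReal_measure_le_tsum_logJumpFactor (measure_Ioc_lt_top (a := a) (b := b)).ne
  rw [ν.toReal_measure_Ioc hab] at this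
  linarith [ν.logStieltjesExp_sub ha hab]

theorem logStieltjesExp_sub_le {a b : ℝ} (ha : 0 ≤ a) (hab : a ≤ b) :
    ν.logStieltjesExp b - ν.logStieltjesExp a ≤ ν b - ν a := by
  have : ∑' r : Ioc a b, ν.logJumpFactor r ≤ 0 := tsum_nonpos fun r => ν.logJumpFactor_nonpos r
  linarith [ν.logStieltjesExp_sub ha hab]

theorem one_add_sub_le_exp_logStieltjesExp_sub {a b : ℝ} (ha : 0 ≤ a) (hab : a ≤ b) :
    1 + (ν b - ν a) ≤ Real.exp (ν.logStieltjesExp b - ν.logStieltjesExp a) := by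
  have hS : ν.measure (Ioc a b) ≠ ∞ := measure_Ioc_lt_top.ne
  have hJ := ν.summable_jumpAt hS
  have hsplit : ∑' r : Ioc a b, ν.logJumpFactor r =
      ∑' r : Ioc a b, Real.log (1 + jumpAt ν r) - ∑' r : Ioc a b, jumpAt ν r :=
    (Real.summable_log_one_add_of_summable hJ).tsum_sub hJ
  have hprod := Real.one_add_tsum_le_exp_tsum_log_one_add (fun r : Ioc a b => ν.jumpAt_nonneg r) hJ
  have hle : ∑' r : Ioc a b, jumpAt ν r ≤ ν b - ν a :=
    (ν.tsum_jumpAt_le hS).trans_eq (ν.toReal_measure_Ioc hab)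
  have hnonneg : 0 ≤ ∑' r : Ioc a b, jumpAt ν r := tsum_nonneg fun r => ν.jumpAt_nonneg r
  rw [ν.logStieltjesExp_sub ha hab, hsplit]
  set d := ν b - ν a
  set J := ∑' r : Ioc a b, jumpAt ν r
  calc 1 + d ≤ (1 + (d - J)) * (1 + J) := by nlinarith
    _ ≤ Real.exp (d - J) * Real.exp (∑' r : Ioc a b, Real.log (1 + jumpAt ν r)) :=
        mul_le_mul (by linarith [Real.add_one_le_exp (d - J)]) hprod (by linarith)
          (Real.exp_pos _).le
    _ = _ := by rw [← Real.exp_add]; ring_nf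

theorem continuousWithinAt_logStieltjesExp {x : ℝ} (hx : 0 ≤ x) :
    ContinuousWithinAt ν.logStieltjesExp (Ici x) x := by
  have hup : Tendsto (fun y => ν.logStieltjesExp x + (ν y - ν x)) (𝓝[≥] x)
      (𝓝 (ν.logStieltjesExp x)) := by
    simpa using ((ν.right_continuous x).sub_const (ν x)).const_add (ν.logStieltjesExp x)
  refine tendsto_of_tendsto_of_tendsto_of_le_of_le' tendsto_const_nhds hup ?_ ?_ <;>
  filter_upwards [self_mem_nhdsWithin] with y (hy : x ≤ y)
  · linarith [ν.logStieltjesExp_sub_nonneg hx hy]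
  · linarith [ν.logStieltjesExp_sub_le hx hy]

theorem logStieltjesExp_eq_sub_tsum_Ioo {a x : ℝ} (ha : 0 ≤ a) (hax : a < x) :
    ν.logStieltjesExp a = ν.logStieltjesExp x + (ν a - ν x) - ν.logJumpFactor x -
      ∑' r : Ioo a x, ν.logJumpFactor r := by
  have h := Summable.tsum_union_disjoint (f := ν.logJumpFactor) (s := Ioo a x) (t := {x})
    (disjoint_singleton_right.2 fun h => h.2.false)
    (ν.summable_logJumpFactor measure_Ioo_lt_top.ne)
    (ν.summable_logJumpFactor measure_singleton_lt_top.ne)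
  rw [Ioo_union_right hax, tsum_singleton x ν.logJumpFactor] at h
  linarith [ν.logStieltjesExp_sub ha hax.le]

theorem tendsto_logStieltjesExp_nhdsLT {x : ℝ} (hx : 0 < x) :
    Tendsto ν.logStieltjesExp (𝓝[<] x)
      (𝓝 (ν.logStieltjesExp x - Real.log (1 + jumpAt ν x))) := by
  have hν := ν.mono.tendsto_leftLim x
  have hvalue : ν.logStieltjesExp x + (leftLim ν x - ν x) - ν.logJumpFactor x =
      ν.logStieltjesExp x - Real.log (1 + jumpAt ν x) := by
    rw [logJumpFactor, jumpAt]
    ring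
  have hlow : Tendsto (fun a => ν.logStieltjesExp x + (ν a - ν x) - ν.logJumpFactor x) (𝓝[<] x)
      (𝓝 (ν.logStieltjesExp x - Real.log (1 + jumpAt ν x))) :=
    hvalue ▸ ((hν.sub_const (ν x)).const_add _).sub_const _
  have hup := hlow.add (hν.const_sub (leftLim ν x))
  rw [sub_self, add_zero] at hup
  refine tendsto_of_tendsto_of_tendsto_of_le_of_le' hlow hup ?_ ?_ <;>
  filter_upwards [Ioo_mem_nhdsLT hx] with a ha <;>
  rw [ν.logStieltjesExp_eq_sub_tsum_Ioo ha.1.le ha.2]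
  · have : ∑' r : Ioo a x, ν.logJumpFactor r ≤ 0 := tsum_nonpos fun r => ν.logJumpFactor_nonpos r
    linarith
  · have := ν.neg_toReal_measure_le_tsum_logJumpFactor (measure_Ioo_lt_top (a := a) (b := x)).ne
    rw [ν.toReal_measure_Ioo ha.2] at this
    linarith

theorem stieltjesExp_pos (x : ℝ) : 0 < stieltjesExp ν x := by
  rw [stieltjesExp_eq_exp_logStieltjesExp]
  exact Real.exp_pos _

theorem monotoneOn_stieltjesExp : MonotoneOn (stieltjesExp ν) (Ici 0) := fun a ha b _ hab => by
  rw [stieltjesExp_eq_exp_logStieltjesExp, stieltjesExp_eq_exp_logStieltjesExp, Real.exp_le_exp]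
  linarith [ν.logStieltjesExp_sub_nonneg ha hab]

theorem stieltjesExp_sub_le_mul {a b : ℝ} (ha : 0 ≤ a) (hab : a ≤ b) :
    stieltjesExp ν b - stieltjesExp ν a ≤ stieltjesExp ν b * (ν b - ν a) := by
  have hpos := ν.stieltjesExp_pos b
  set y := ν.logStieltjesExp b - ν.logStieltjesExp a
  calc stieltjesExp ν b - stieltjesExp ν a = stieltjesExp ν b * (1 - Real.exp (-y)) := by
        simp only [stieltjesExp_eq_exp_logStieltjesExp, y, mul_sub, ← Real.exp_add]
        ring_nf
    _ ≤ stieltjesExp ν b * y := by gcongr; linarith [Real.add_one_le_exp (-y)]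
    _ ≤ stieltjesExp ν b * (ν b - ν a) := by gcongr; exact ν.logStieltjesExp_sub_le ha hab

theorem mul_sub_le_stieltjesExp_sub {a b : ℝ} (ha : 0 ≤ a) (hab : a ≤ b) :
    stieltjesExp ν a * (ν b - ν a) ≤ stieltjesExp ν b - stieltjesExp ν a := by
  have hpos := ν.stieltjesExp_pos a
  have hexp := ν.one_add_sub_le_exp_logStieltjesExp_sub ha hab
  have hb : stieltjesExp ν b = stieltjesExp ν a *
      Real.exp (ν.logStieltjesExp b - ν.logStieltjesExp a) := by
    simp only [stieltjesExp_eq_exp_logStieltjesExp, ← Real.exp_add]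
    ring_nf
  rw [hb]
  nlinarith

theorem continuousWithinAt_stieltjesExp {x : ℝ} (hx : 0 ≤ x) :
    ContinuousWithinAt (stieltjesExp ν) (Ici x) x := by
  rw [funext ν.stieltjesExp_eq_exp_logStieltjesExp]
  exact Real.continuous_exp.continuousAt.comp_continuousWithinAt
    (ν.continuousWithinAt_logStieltjesExp hx)

theorem tendsto_stieltjesExp_nhdsLT {x : ℝ} (hx : 0 < x) :
    Tendsto (stieltjesExp ν) (𝓝[<] x) (𝓝 (stieltjesExp ν x / (1 + jumpAt ν x))) := by
  have h := (ν.tendsto_logStieltjesExp_nhdsLT hx).rexp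
  rw [Real.exp_sub, Real.exp_log (by linarith [ν.jumpAt_nonneg x]),
    ← stieltjesExp_eq_exp_logStieltjesExp] at h
  exact h.congr fun a => (ν.stieltjesExp_eq_exp_logStieltjesExp a).symm

theorem leftLim_stieltjesExp {x : ℝ} (hx : 0 < x) :
    leftLim (stieltjesExp ν) x = stieltjesExp ν x / (1 + jumpAt ν x) :=
  leftLim_eq_of_tendsto (ν.tendsto_stieltjesExp_nhdsLT hx)

theorem stieltjesExp_sub_leftLim {x : ℝ} (hx : 0 < x) :
    stieltjesExp ν x - leftLim (stieltjesExp ν) x =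
      leftLim (stieltjesExp ν) x * (ν x - leftLim ν x) := by
  have := ν.jumpAt_nonneg x
  rw [ν.leftLim_stieltjesExp hx, show ν x - leftLim ν x = jumpAt ν x from rfl]
  field_simp
  ring

theorem setIntegral_leftLim_stieltjesExp {s t : ℝ} (hs : 0 ≤ s) (hst : s ≤ t) :
    ∫ r in Ioc s t, leftLim (stieltjesExp ν) r ∂ν.measure = stieltjesExp ν t - stieltjesExp ν s :=
  setIntegral_leftLim_eq_sub_of_Icc ν hst
    (ν.monotoneOn_stieltjesExp.mono fun _ hx => hs.trans hx.1)
    (fun x _ => (ν.stieltjesExp_pos x).le)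
    (fun _ hx => ν.continuousWithinAt_stieltjesExp (hs.trans hx.1))
    (fun _ ha _ _ hab => ν.mul_sub_le_stieltjesExp_sub (hs.trans ha.1) hab)
    (fun _ ha _ _ hab => ν.stieltjesExp_sub_le_mul (hs.trans ha.1) hab)
    (fun _ hx => ν.stieltjesExp_sub_leftLim (hs.trans_lt hx.1))

end Exponential

end StieltjesFunction

theorem stieltjesExp_solves_linear_integral_equation_general
    (ν : StieltjesFunction ℝ)
    (u₀ s t : ℝ) (hs : 0 ≤ s) (hst : s ≤ t) :
    u₀ * stieltjesExp (fun x => ν x) t / stieltjesExp (fun x => ν x) s =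
      u₀ * stieltjesExp (fun x => ν x) s / stieltjesExp (fun x => ν x) s +
        ∫ r in Set.Ioc s t,
          Function.leftLim
            (fun r' => u₀ * stieltjesExp (fun x => ν x) r' / stieltjesExp (fun x => ν x) s) r
          ∂ν.measure := by
  have hEs := ν.stieltjesExp_pos s
  have hleftLim : EqOn (leftLim fun r => u₀ * stieltjesExp ν r / stieltjesExp ν s)
      (fun r => u₀ / stieltjesExp ν s * leftLim (stieltjesExp ν) r) (Ioc s t) := fun r hr =>
    leftLim_eq_of_tendsto <| by
      dsimp only
      rw [ν.leftLim_stieltjesExp (hs.trans_lt hr.1), mul_comm_div, mul_div_assoc']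
      exact ((ν.tendsto_stieltjesExp_nhdsLT (hs.trans_lt hr.1)).const_mul u₀).div_const _
  rw [setIntegral_congr_fun measurableSet_Ioc hleftLim, integral_const_mul,
    ν.setIntegral_leftLim_stieltjesExp hs hst]
  field_simp
  ring

/-- For a nondecreasing right-continuous `ν` (a Stieltjes function,
with induced Borel measure `ν.measure`), any `u₀ ∈ ℝ` and `0 ≤ s ≤ t ≤ T`, the function
`u r = u₀ ⬝ 𝔈(ν)(r) / 𝔈(ν)(s)` satisfies the Lebesgue–Stieltjes integral equation
`u t = u s + ∫_{(s,t]} u(r⁻) dν(r)`. -/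
theorem stieltjesExp_solves_linear_integral_equation
    (T : ℝ) (hT : 0 < T) (ν : StieltjesFunction ℝ)
    (u₀ s t : ℝ) (hs : 0 ≤ s) (hst : s ≤ t) (ht : t ≤ T) :
    u₀ * stieltjesExp (fun x => ν x) t / stieltjesExp (fun x => ν x) s =
      u₀ * stieltjesExp (fun x => ν x) s / stieltjesExp (fun x => ν x) s +
        ∫ r in Set.Ioc s t,
          Function.leftLim
            (fun r' => u₀ * stieltjesExp (fun x => ν x) r' / stieltjesExp (fun x => ν x) s) r
          ∂ν.measure :=
  stieltjesExp_solves_linear_integral_equation_general ν u₀ s t hs hst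
end
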